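/- If W is a weighted simple game on n voters, then W has a normalized realization (q, w) such that for all voters i, j ∈ N: w_i = w_j if and only if i and j are equally desirable in W, and w_i = 0 if and only if i is a dummy in W. (Thus the partition of voters by weight at this realization is exactly the partition into desirability classes, with the dummies being precisely the zero-weight voters.) -/

import Mathlib

/-!
Start from any realization. Deleting dummies never turns a winning coalition into a losing
one, so setting the weights of the dummies to zero and renormalizing yields a realization whose
zero weights sit exactly on the dummies. For a fixed quota the realizations form a convex set
that is stable under the symmetry group of the game, so averaging over that group produces a
symmetric realization. Equally desirable voters are exchanged by a transposition in the group,
hence receive equal weights, and symmetries map dummies to dummies, so these keep weight zero.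
The converse implications hold in every realization.
-/

def IsSimpleGame (n : ℕ) (W : Finset (Finset (Fin n))) : Prop :=
  Finset.univ ∈ W ∧ ∅ ∉ W ∧ ∀ S ∈ W, ∀ R : Finset (Fin n), S ⊆ R → R ∈ W

def IsNormRealization (n : ℕ) (W : Finset (Finset (Fin n))) (q : ℝ) (w : Fin n → ℝ) : Prop :=
  (∀ i, 0 ≤ w i) ∧ (∑ i, w i = 1) ∧ 0 < q ∧ q ≤ 1 ∧
    ∀ A : Finset (Fin n), A ∈ W ↔ q ≤ ∑ i ∈ A, w i

def EquallyDesirable (n : ℕ) (W : Finset (Finset (Fin n))) (i j : Fin n) : Prop :=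
  ∀ S : Finset (Fin n), i ∉ S → j ∉ S → (insert i S ∈ W ↔ insert j S ∈ W)

def IsDummy (n : ℕ) (W : Finset (Finset (Fin n))) (i : Fin n) : Prop :=
  ∀ S : Finset (Fin n), i ∉ S → insert i S ∈ W → S ∈ W

open Finset Equiv

variable {n : ℕ} {W : Finset (Finset (Fin n))} {q : ℝ} {w : Fin n → ℝ} {i j : Fin n}

lemma map_swap_insert_eq {α : Type*} [DecidableEq α] {a b : α} {s : Finset α}
    (ha : a ∉ s) (hb : b ∉ s) : (insert a s).map (swap a b).toEmbedding = insert b s := by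
  ext x
  rw [mem_map_equiv, symm_swap, swap_apply_def]
  split_ifs <;> aesop

lemma map_swap_eq_self {α : Type*} [DecidableEq α] {a b : α} {s : Finset α}
    (h : a ∈ s ↔ b ∈ s) : s.map (swap a b).toEmbedding = s := by
  ext x
  rw [mem_map_equiv, symm_swap, swap_apply_def]
  split_ifs <;> simp_all

lemma EquallyDesirable.symm (h : EquallyDesirable n W i j) : EquallyDesirable n W j i :=
  fun S hj hi => (h S hi hj).symm

lemma IsNormRealization.mem_iff (h : IsNormRealization n W q w) (A : Finset (Fin n)) :
    A ∈ W ↔ q ≤ ∑ k ∈ A, w k :=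
  h.2.2.2.2 A

lemma IsNormRealization.equallyDesirable_of_eq (h : IsNormRealization n W q w)
    (hij : w i = w j) : EquallyDesirable n W i j := by
  intro S hi hj
  rw [h.mem_iff, h.mem_iff, sum_insert hi, sum_insert hj, hij]

lemma IsNormRealization.isDummy_of_eq_zero (h : IsNormRealization n W q w) (hi : w i = 0) :
    IsDummy n W i := by
  intro S hiS hS
  rwa [h.mem_iff, sum_insert hiS, hi, zero_add, ← h.mem_iff] at hS

lemma IsDummy.erase_mem (hi : IsDummy n W i) {A : Finset (Fin n)} (hA : A ∈ W) :
    A.erase i ∈ W := by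
  by_cases hiA : i ∈ A
  · exact hi _ (notMem_erase i A) (by rwa [insert_erase hiA])
  · rwa [erase_eq_of_notMem hiA]

lemma sdiff_mem_of_forall_isDummy {A D : Finset (Fin n)} (hD : ∀ d ∈ D, IsDummy n W d)
    (hA : A ∈ W) : A \ D ∈ W := by
  induction D using Finset.induction_on with
  | empty => rwa [sdiff_empty]
  | insert d D _ ih =>
    rw [sdiff_insert]
    exact (hD d (mem_insert_self d D)).erase_mem (ih fun x hx => hD x (mem_insert_of_mem hx))

open Classical in
lemma filter_not_isDummy_mem_iff (hSG : IsSimpleGame n W) (A : Finset (Fin n)) :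
    A.filter (¬ IsDummy n W ·) ∈ W ↔ A ∈ W := by
  refine ⟨fun h => hSG.2.2 _ h A (filter_subset _ _), fun h => ?_⟩
  rw [filter_not]
  exact sdiff_mem_of_forall_isDummy (fun d hd => (mem_filter.1 hd).2) h

lemma isNormRealization_div_sum {v : Fin n → ℝ} (hv : ∀ k, 0 ≤ v k) (hq : 0 < q)
    (hqv : q ≤ ∑ k, v k) (hmem : ∀ A : Finset (Fin n), A ∈ W ↔ q ≤ ∑ k ∈ A, v k) :
    IsNormRealization n W (q / ∑ k, v k) (fun i => v i / ∑ k, v k) := by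
  have hpos : 0 < ∑ k, v k := hq.trans_le hqv
  refine ⟨fun i => div_nonneg (hv i) hpos.le, ?_, div_pos hq hpos,
    (div_le_one hpos).2 hqv, fun A => ?_⟩
  · rw [← sum_div, div_self hpos.ne']
  · rw [hmem, ← sum_div, div_le_div_iff_of_pos_right hpos]

lemma IsNormRealization.exists_eq_zero_iff_isDummy (h : IsNormRealization n W q w)
    (hSG : IsSimpleGame n W) :
    ∃ (q' : ℝ) (w' : Fin n → ℝ), IsNormRealization n W q' w' ∧
      ∀ i, w' i = 0 ↔ IsDummy n W i := by
  classical
  set v : Fin n → ℝ := fun i => if IsDummy n W i then 0 else w i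
  have hv : ∀ A : Finset (Fin n), ∑ k ∈ A, v k = ∑ k ∈ A.filter (¬ IsDummy n W ·), w k := by
    intro A
    rw [sum_filter]
    exact sum_congr rfl fun k _ => by by_cases hk : IsDummy n W k <;> simp [v, hk]
  have hmem : ∀ A : Finset (Fin n), A ∈ W ↔ q ≤ ∑ k ∈ A, v k := fun A => by
    rw [hv, ← h.mem_iff, filter_not_isDummy_mem_iff hSG]
  have hqv : q ≤ ∑ k, v k := (hmem _).1 hSG.1
  refine ⟨_, _, isNormRealization_div_sum (fun k => ?_) h.2.2.1 hqv hmem, fun i => ?_⟩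
  · by_cases hk : IsDummy n W k <;> simp [v, hk, h.1 k]
  · have hpos : 0 < ∑ k, v k := h.2.2.1.trans_le hqv
    by_cases hi : IsDummy n W i
    · simp [v, hi]
    · simpa [v, hi, hpos.ne'] using mt h.isDummy_of_eq_zero hi

def autGroup (W : Finset (Finset (Fin n))) : Subgroup (Perm (Fin n)) where
  carrier := {π | ∀ A : Finset (Fin n), A.map π.toEmbedding ∈ W ↔ A ∈ W}
  one_mem' A := by rw [Perm.one_def, refl_toEmbedding, map_refl]
  mul_mem' {π σ} hπ hσ A := by
    rw [Perm.mul_def, trans_toEmbedding, ← map_map, hπ, hσ]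
  inv_mem' {π} hπ A := by
    rw [← hπ, map_map, ← trans_toEmbedding, ← Perm.mul_def, mul_inv_cancel, Perm.one_def,
      refl_toEmbedding, map_refl]

lemma IsDummy.apply_of_mem_autGroup (hi : IsDummy n W i) {π : Perm (Fin n)}
    (hπ : π ∈ autGroup W) : IsDummy n W (π i) := by
  classical
  intro S hiS hS
  set S' := S.map π.symm.toEmbedding
  have hS' : S'.map π.toEmbedding = S := by simp [S', map_map]
  have hiS' : i ∉ S' := by simpa [S', mem_map_equiv] using hiS
  rw [← hS', hπ]
  refine hi S' hiS' ?_
  rwa [← hπ, map_insert, hS']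

lemma EquallyDesirable.mem_of_map_swap_mem (h : EquallyDesirable n W i j) {A : Finset (Fin n)}
    (hA : A.map (swap i j).toEmbedding ∈ W) : A ∈ W := by
  by_cases hij : i ∈ A ↔ j ∈ A
  · rwa [map_swap_eq_self hij] at hA
  wlog hi : i ∈ A generalizing i j
  · rw [swap_comm] at hA
    exact this h.symm hA (by tauto) (by tauto)
  have hiS : i ∉ A.erase i := notMem_erase i A
  have hjS : j ∉ A.erase i := fun hj => hij ⟨fun _ => mem_of_mem_erase hj, fun _ => hi⟩
  rw [← insert_erase hi] at hA ⊢
  rw [map_swap_insert_eq hiS hjS] at hA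
  exact (h _ hiS hjS).2 hA

lemma EquallyDesirable.swap_mem_autGroup (h : EquallyDesirable n W i j) :
    swap i j ∈ autGroup W := by
  intro A
  refine ⟨h.mem_of_map_swap_mem, fun hA => h.mem_of_map_swap_mem ?_⟩
  rwa [map_map, ← trans_toEmbedding, ← Perm.mul_def, swap_mul_self, Perm.one_def,
    refl_toEmbedding, map_refl]

lemma IsNormRealization.comp_perm (h : IsNormRealization n W q w) {π : Perm (Fin n)}
    (hπ : π ∈ autGroup W) : IsNormRealization n W q (w ∘ π) := by
  refine ⟨fun k => h.1 (π k), (Equiv.sum_comp π w).trans h.2.1, h.2.2.1, h.2.2.2.1,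
    fun A => ?_⟩
  rw [← hπ A, h.mem_iff, sum_map]
  rfl

lemma convex_setOf_isNormRealization : Convex ℝ {w | IsNormRealization n W q w} := by
  intro u hu v hv a b ha hb hab
  have hsum : ∀ A : Finset (Fin n),
      ∑ k ∈ A, (a • u + b • v) k = a * ∑ k ∈ A, u k + b * ∑ k ∈ A, v k := fun A => by
    simp only [Pi.add_apply, Pi.smul_apply, smul_eq_mul, sum_add_distrib, mul_sum]
  refine ⟨fun k => ?_, ?_, hu.2.2.1, hu.2.2.2.1, fun A => ?_⟩
  · exact add_nonneg (mul_nonneg ha (hu.1 k)) (mul_nonneg hb (hv.1 k))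
  · rw [hsum, hu.2.1, hv.2.1, mul_one, mul_one, hab]
  · rw [hsum]
    refine ⟨fun hA => convex_Ici q ((hu.mem_iff A).1 hA) ((hv.mem_iff A).1 hA) ha hb hab,
      fun hq => by_contra fun hA => not_lt_of_ge hq ?_⟩
    exact convex_Iio q (not_le.1 (mt (hu.mem_iff A).2 hA)) (not_le.1 (mt (hv.mem_iff A).2 hA))
      ha hb hab

lemma IsNormRealization.exists_autGroup_invariant (h : IsNormRealization n W q w) :
    ∃ w' : Fin n → ℝ, IsNormRealization n W q w' ∧
      (∀ π ∈ autGroup W, ∀ i, w' (π i) = w' i) ∧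
      ∀ i, (∀ π ∈ autGroup W, w (π i) = 0) → w' i = 0 := by
  classical
  set G := autGroup W
  set c : ℝ := (Fintype.card G : ℝ)⁻¹
  set w' := ∑ π : G, c • (w ∘ ⇑(π : Perm (Fin n)))
  have hw' : ∀ i, w' i = c * ∑ π : G, w ((π : Perm (Fin n)) i) := fun i => by
    simp only [w', Finset.sum_apply, Pi.smul_apply, Function.comp_apply, smul_eq_mul, mul_sum]
  refine ⟨w', ?_, fun π hπ i => ?_, fun i hi => ?_⟩
  · refine convex_setOf_isNormRealization.sum_mem (fun _ _ => by positivity) ?_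
      fun π _ => h.comp_perm π.2
    simp [c]
  · rw [hw', hw']
    congr 1
    exact Fintype.sum_equiv (Equiv.mulRight ⟨π, hπ⟩) _ _ fun σ => rfl
  · rw [hw', sum_eq_zero fun π _ => hi _ π.2, mul_zero]

/-- Every weighted simple game admits a normalized realization in which two voters
have equal weights iff they are equally desirable, and a voter has weight zero iff
it is a dummy. -/
theorem exists_realization_weights_reflect_desirability
    (n : ℕ) (W : Finset (Finset (Fin n))) (hSG : IsSimpleGame n W)
    (hwtd : ∃ (q : ℝ) (w : Fin n → ℝ), IsNormRealization n W q w) :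
    ∃ (q : ℝ) (w : Fin n → ℝ), IsNormRealization n W q w ∧
      (∀ i j : Fin n, w i = w j ↔ EquallyDesirable n W i j) ∧
      (∀ i : Fin n, w i = 0 ↔ IsDummy n W i) := by
  obtain ⟨q₀, w₀, hw₀⟩ := hwtd
  obtain ⟨q, w, hw, hzero⟩ := hw₀.exists_eq_zero_iff_isDummy hSG
  obtain ⟨w', hw', hinv, hzero'⟩ := hw.exists_autGroup_invariant
  refine ⟨q, w', hw', fun i j => ⟨hw'.equallyDesirable_of_eq, fun hij => ?_⟩,
    fun i => ⟨hw'.isDummy_of_eq_zero, fun hi => ?_⟩⟩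
  · simpa using (hinv _ hij.swap_mem_autGroup i).symm
  · exact hzero' i fun π hπ => (hzero _).2 (hi.apply_of_mem_autGroup hπ)
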